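/- arXiv:2203.08301 — 2 statements merged into one kernel-verified Lean document; each statement's English description precedes it below -/
import Mathlib

section
/- There exists a simple graph on a vertex type with exactly 50 elements that is strongly regular with parameters (50, 7, 0, 1), i.e. the Hoffman–Singleton graph exists. -/
/-!
Robertson's pentagon–pentagram construction. Take five pentagons `P h` and five pentagrams `Q m`,
each on the vertex set `ZMod 5`, and join vertex `j` of `P h` to vertex `h * m + j` of `Q m`.
Every vertex has two neighbours on its own cycle and one on each of the five cycles of the other
kind, so the graph is 7-regular. Two vertices of different pentagons `P h`, `P h'` have a common
neighbour in `Q m` exactly when `h * m + j = h' * m + j'`, which has a unique solution `m` because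
`ZMod 5` is a field; the remaining cases are similar, and all of them are finite checks.
-/

/-- `(false, h, j)` is vertex `j` of the pentagon `P h`, `(true, m, i)` is vertex `i` of the
pentagram `Q m`. -/
def hoffmanSingletonAdj : Bool × ZMod 5 × ZMod 5 → Bool × ZMod 5 × ZMod 5 → Prop
  | (false, h, j), (false, h', j') => h = h' ∧ (j' - j = 1 ∨ j - j' = 1)
  | (true, m, i), (true, m', i') => m = m' ∧ (i' - i = 2 ∨ i - i' = 2)
  | (false, h, j), (true, m, i) => i = h * m + j
  | (true, m, i), (false, h, j) => i = h * m + j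

instance : DecidableRel hoffmanSingletonAdj
  | (false, _, _), (false, _, _) => inferInstanceAs (Decidable (_ ∧ _))
  | (true, _, _), (true, _, _) => inferInstanceAs (Decidable (_ ∧ _))
  | (false, _, _), (true, _, _) => inferInstanceAs (Decidable (_ = _))
  | (true, _, _), (false, _, _) => inferInstanceAs (Decidable (_ = _))

def hoffmanSingletonGraph : SimpleGraph (Bool × ZMod 5 × ZMod 5) where
  Adj := hoffmanSingletonAdj
  symm := by
    constructor
    rintro ⟨_ | _, h, j⟩ ⟨_ | _, h', j'⟩ hadj
    · exact ⟨hadj.1.symm, hadj.2.symm⟩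
    · exact hadj
    · exact hadj
    · exact ⟨hadj.1.symm, hadj.2.symm⟩
  loopless := by constructor; decide

instance : DecidableRel hoffmanSingletonGraph.Adj :=
  inferInstanceAs (DecidableRel hoffmanSingletonAdj)

namespace hoffmanSingletonGraph

theorem isRegularOfDegree : hoffmanSingletonGraph.IsRegularOfDegree 7 := by
  intro v
  revert v
  decide

set_option maxRecDepth 100000 in
theorem card_commonNeighbors_of_adj :
    ∀ v w, hoffmanSingletonGraph.Adj v w →
      Fintype.card (hoffmanSingletonGraph.commonNeighbors v w) = 0 := by
  decide

set_option maxRecDepth 100000 in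
set_option maxHeartbeats 4000000 in
theorem card_commonNeighbors_of_not_adj :
    Pairwise fun v w ↦ ¬hoffmanSingletonGraph.Adj v w →
      Fintype.card (hoffmanSingletonGraph.commonNeighbors v w) = 1 := by
  unfold Pairwise
  decide

theorem isSRGWith : hoffmanSingletonGraph.IsSRGWith 50 7 0 1 where
  card := rfl
  regular := isRegularOfDegree
  of_adj := card_commonNeighbors_of_adj
  of_not_adj := card_commonNeighbors_of_not_adj

end hoffmanSingletonGraph

/-- The Hoffman–Singleton graph exists: there is a simple graph on a vertex type with
exactly 50 elements that is strongly regular with parameters (50, 7, 0, 1). -/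
theorem hoffmanSingleton_exists :
    ∃ (V : Type) (_ : Fintype V) (G : SimpleGraph V) (_ : DecidableRel G.Adj),
      G.IsSRGWith 50 7 0 1 :=
  ⟨_, inferInstance, hoffmanSingletonGraph, inferInstance, hoffmanSingletonGraph.isSRGWith⟩
end

section
/- Let V be a Majorana algebra and let a ∈ V be a Majorana axis with eigenspace decomposition V = V₁ ⊕ V₀ ⊕ V_{1/4} ⊕ V_{1/32} for the adjoint operator ad(a). Then the eigenspaces obey the fusion rules: V₀·V₀ ⊆ V₀; V₀·V_{1/4} ⊆ V_{1/4}; V₀·V_{1/32} ⊆ V_{1/32}; V_{1/4}·V_{1/4} ⊆ V₁ ⊕ V₀; V_{1/4}·V_{1/32} ⊆ V_{1/32}; and V_{1/32}·V_{1/32} ⊆ V₁ ⊕ V₀ ⊕ V_{1/4}. -/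
/-- A Majorana algebra: a real vector space with a symmetric positive-definite bilinear
form and a commutative bilinear product satisfying the associativity law (M1) and the
Norton inequality (M2). -/
structure MajoranaData (V : Type*) [AddCommGroup V] [Module ℝ V] where
  /-- the inner product -/
  inn : V →ₗ[ℝ] V →ₗ[ℝ] ℝ
  /-- the algebra product -/
  mul : V →ₗ[ℝ] V →ₗ[ℝ] V
  inn_symm : ∀ u v : V, inn u v = inn v u
  inn_pos : ∀ v : V, v ≠ 0 → 0 < inn v v
  mul_comm : ∀ u v : V, mul u v = mul v u
  inn_mul_assoc : ∀ u v w : V, inn u (mul v w) = inn (mul u v) w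
  norton : ∀ u v : V, inn (mul u v) (mul u v) ≤ inn (mul u u) (mul v v)

namespace MajoranaData

variable {V : Type*} [AddCommGroup V] [Module ℝ V]

/-- The `μ`-eigenspace of the adjoint operator `ad(a) : v ↦ a · v`. -/
def eig (D : MajoranaData V) (a : V) (μ : ℝ) : Submodule ℝ V where
  carrier := {v | D.mul a v = μ • v}
  add_mem' := by
    intro u v hu hv
    simp only [Set.mem_setOf_eq] at hu hv ⊢
    rw [map_add, hu, hv, smul_add]
  zero_mem' := by simp [Set.mem_setOf_eq]
  smul_mem' := by
    intro c v hv
    simp only [Set.mem_setOf_eq] at hv ⊢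
    rw [map_smul, hv, smul_comm]

/-- A Majorana axis: axioms (M3)–(M7). -/
structure IsAxis (D : MajoranaData V) (a : V) : Prop where
  /-- (M3): `a` is an idempotent of length 1 -/
  inn_self : D.inn a a = 1
  idem : D.mul a a = a
  /-- (M4): `ad(a)` is semisimple with spectrum contained in `{1, 0, 1/4, 1/32}` -/
  decomp : ∀ v : V, ∃ v₁ ∈ D.eig a 1, ∃ v₀ ∈ D.eig a 0, ∃ v₄ ∈ D.eig a (1/4),
    ∃ v₃₂ ∈ D.eig a (1/32), v = v₁ + v₀ + v₄ + v₃₂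
  /-- (M5): the 1-eigenspace is `ℝ a` -/
  eig_one : ∀ v ∈ D.eig a 1, ∃ c : ℝ, v = c • a
  /-- (M6): the Majorana involution `τ(a)` preserves the product -/
  tau : ∃ τ : V →ₗ[ℝ] V,
    (∀ v ∈ D.eig a 1, τ v = v) ∧ (∀ v ∈ D.eig a 0, τ v = v) ∧
    (∀ v ∈ D.eig a (1/4), τ v = v) ∧ (∀ v ∈ D.eig a (1/32), τ v = -v) ∧
    (∀ u v : V, D.mul (τ u) (τ v) = τ (D.mul u v))
  /-- (M7): `σ(a)` preserves the product on `V₊ = V₁ ⊕ V₀ ⊕ V_{1/4}` -/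
  sigma : ∃ σ : V →ₗ[ℝ] V,
    (∀ v ∈ D.eig a 1, σ v = v) ∧ (∀ v ∈ D.eig a 0, σ v = v) ∧
    (∀ v ∈ D.eig a (1/4), σ v = -v) ∧
    (∀ u v : V, u ∈ D.eig a 1 ⊔ D.eig a 0 ⊔ D.eig a (1/4) →
      v ∈ D.eig a 1 ⊔ D.eig a 0 ⊔ D.eig a (1/4) →
      D.mul (σ u) (σ v) = σ (D.mul u v))

end MajoranaData


/-!
The Majorana involution `τ(a)` is an automorphism acting as `1` on `V₊` and as `-1` on
`V_{1/32}`, so it induces a `ℤ/2`-grading of the product; likewise `σ(a)` grades `V₊` into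
`V₁ ⊕ V₀` and `V_{1/4}`. These two gradings give every rule except `V₀ · V₀ ⊆ V₀`, for which
they only give `V₀ · V₀ ⊆ V₁ ⊕ V₀`; the `V₁ = ℝa` component of `u · v` is then killed by
`(a, u · v) = (a · u, v) = 0`.
-/

structure IsSignGrading {R V : Type*} [CommRing R] [AddCommGroup V] [Module R V]
    (mul : V →ₗ[R] V →ₗ[R] V) (f : V →ₗ[R] V) (P N : Submodule R V) : Prop where
  map_of_mem_left : ∀ p ∈ P, f p = p
  map_of_mem_right : ∀ n ∈ N, f n = -n
  map_mul : ∀ u ∈ P ⊔ N, ∀ v ∈ P ⊔ N, mul (f u) (f v) = f (mul u v)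
  mul_mem : ∀ u ∈ P ⊔ N, ∀ v ∈ P ⊔ N, mul u v ∈ P ⊔ N

namespace IsSignGrading

variable {K V : Type*} [Field K] [CharZero K] [AddCommGroup V] [Module K V]
  {mul : V →ₗ[K] V →ₗ[K] V} {f : V →ₗ[K] V} {P N : Submodule K V} {u v w : V}

theorem mem_left_of_map_eq_self (hf : IsSignGrading mul f P N) (hw : w ∈ P ⊔ N)
    (hfw : f w = w) : w ∈ P := by
  have := IsAddTorsionFree.of_isTorsionFree K V
  obtain ⟨p, hp, n, hn, rfl⟩ := Submodule.mem_sup.1 hw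
  rw [map_add, hf.map_of_mem_left p hp, hf.map_of_mem_right n hn, add_right_inj,
    neg_eq_self] at hfw
  rwa [hfw, add_zero]

theorem mem_right_of_map_eq_neg (hf : IsSignGrading mul f P N) (hw : w ∈ P ⊔ N)
    (hfw : f w = -w) : w ∈ N := by
  have := IsAddTorsionFree.of_isTorsionFree K V
  obtain ⟨p, hp, n, hn, rfl⟩ := Submodule.mem_sup.1 hw
  rw [map_add, hf.map_of_mem_left p hp, hf.map_of_mem_right n hn, neg_add, add_left_inj,
    self_eq_neg] at hfw
  rwa [hfw, zero_add]

theorem mul_mem_left (hf : IsSignGrading mul f P N) (hu : u ∈ P) (hv : v ∈ P) :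
    mul u v ∈ P := by
  have hu' : u ∈ P ⊔ N := Submodule.mem_sup_left hu
  have hv' : v ∈ P ⊔ N := Submodule.mem_sup_left hv
  refine hf.mem_left_of_map_eq_self (hf.mul_mem u hu' v hv') ?_
  rw [← hf.map_mul u hu' v hv', hf.map_of_mem_left u hu, hf.map_of_mem_left v hv]

theorem mul_mem_right (hf : IsSignGrading mul f P N) (hu : u ∈ P) (hv : v ∈ N) :
    mul u v ∈ N := by
  have hu' : u ∈ P ⊔ N := Submodule.mem_sup_left hu
  have hv' : v ∈ P ⊔ N := Submodule.mem_sup_right hv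
  refine hf.mem_right_of_map_eq_neg (hf.mul_mem u hu' v hv') ?_
  rw [← hf.map_mul u hu' v hv', hf.map_of_mem_left u hu, hf.map_of_mem_right v hv, map_neg]

theorem mul_mem_left_of_mem_right (hf : IsSignGrading mul f P N) (hu : u ∈ N) (hv : v ∈ N) :
    mul u v ∈ P := by
  have hu' : u ∈ P ⊔ N := Submodule.mem_sup_right hu
  have hv' : v ∈ P ⊔ N := Submodule.mem_sup_right hv
  refine hf.mem_left_of_map_eq_self (hf.mul_mem u hu' v hv') ?_
  rw [← hf.map_mul u hu' v hv', hf.map_of_mem_right u hu, hf.map_of_mem_right v hv,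
    map_neg, LinearMap.map_neg₂, neg_neg]

end IsSignGrading

namespace MajoranaData

variable {V : Type*} [AddCommGroup V] [Module ℝ V] {D : MajoranaData V} {a u v w : V}

noncomputable def plusSpace (D : MajoranaData V) (a : V) : Submodule ℝ V :=
  D.eig a 1 ⊔ D.eig a 0 ⊔ D.eig a (1/4)

theorem inn_eq_zero_of_mem_eig_zero (hidem : D.mul a a = a) (hw : w ∈ D.eig a 0) :
    D.inn a w = 0 := by
  have hw : D.mul a w = 0 := by rw [hw.out, zero_smul]
  rw [← hidem, ← D.inn_mul_assoc, hw, map_zero]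

theorem inn_mul_eq_zero_of_mem_eig_zero (hu : u ∈ D.eig a 0) : D.inn a (D.mul u v) = 0 := by
  have hu : D.mul a u = 0 := by rw [hu.out, zero_smul]
  rw [D.inn_mul_assoc, hu, map_zero, LinearMap.zero_apply]

namespace IsAxis

theorem mem_eig_zero_of_inn_eq_zero (ha : D.IsAxis a) (hw : w ∈ D.eig a 1 ⊔ D.eig a 0)
    (hinn : D.inn a w = 0) : w ∈ D.eig a 0 := by
  obtain ⟨w₁, hw₁, w₀, hw₀, rfl⟩ := Submodule.mem_sup.1 hw
  obtain ⟨c, rfl⟩ := ha.eig_one w₁ hw₁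
  rw [map_add, map_smul, ha.inn_self, inn_eq_zero_of_mem_eig_zero ha.idem hw₀] at hinn
  rw [show c = 0 by simpa using hinn, zero_smul, zero_add]
  exact hw₀

theorem plusSpace_sup_eig_eq_top (ha : D.IsAxis a) : D.plusSpace a ⊔ D.eig a (1/32) = ⊤ := by
  refine eq_top_iff.2 fun v _ => ?_
  obtain ⟨v₁, h₁, v₀, h₀, v₄, h₄, v₃₂, h₃₂, rfl⟩ := ha.decomp v
  exact Submodule.add_mem_sup (Submodule.add_mem_sup (Submodule.add_mem_sup h₁ h₀) h₄) h₃₂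

theorem exists_tau_isSignGrading (ha : D.IsAxis a) :
    ∃ τ : V →ₗ[ℝ] V, IsSignGrading D.mul τ (D.plusSpace a) (D.eig a (1/32)) := by
  obtain ⟨τ, h₁, h₀, h₄, h₃₂, hmul⟩ := ha.tau
  have hplus : D.plusSpace a ≤ LinearMap.eqLocus τ LinearMap.id :=
    sup_le (sup_le (fun v hv => h₁ v hv) fun v hv => h₀ v hv) fun v hv => h₄ v hv
  refine ⟨τ, fun p hp => hplus hp, h₃₂, fun u _ v _ => hmul u v, fun u _ v _ => ?_⟩
  rw [ha.plusSpace_sup_eig_eq_top]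
  exact Submodule.mem_top

theorem mul_mem_plusSpace (ha : D.IsAxis a) (hu : u ∈ D.plusSpace a)
    (hv : v ∈ D.plusSpace a) : D.mul u v ∈ D.plusSpace a := by
  obtain ⟨τ, hτ⟩ := ha.exists_tau_isSignGrading
  exact hτ.mul_mem_left hu hv

theorem mul_mem_eig_thirtySecond (ha : D.IsAxis a) (hu : u ∈ D.plusSpace a)
    (hv : v ∈ D.eig a (1/32)) : D.mul u v ∈ D.eig a (1/32) := by
  obtain ⟨τ, hτ⟩ := ha.exists_tau_isSignGrading
  exact hτ.mul_mem_right hu hv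

theorem mul_mem_plusSpace_of_mem_eig_thirtySecond (ha : D.IsAxis a)
    (hu : u ∈ D.eig a (1/32)) (hv : v ∈ D.eig a (1/32)) : D.mul u v ∈ D.plusSpace a := by
  obtain ⟨τ, hτ⟩ := ha.exists_tau_isSignGrading
  exact hτ.mul_mem_left_of_mem_right hu hv

theorem exists_sigma_isSignGrading (ha : D.IsAxis a) :
    ∃ σ : V →ₗ[ℝ] V, IsSignGrading D.mul σ (D.eig a 1 ⊔ D.eig a 0) (D.eig a (1/4)) := by
  obtain ⟨σ, h₁, h₀, h₄, hmul⟩ := ha.sigma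
  have hfix : D.eig a 1 ⊔ D.eig a 0 ≤ LinearMap.eqLocus σ LinearMap.id :=
    sup_le (fun v hv => h₁ v hv) fun v hv => h₀ v hv
  exact ⟨σ, fun p hp => hfix hp, h₄, fun u hu v hv => hmul u v hu hv,
    fun u hu v hv => ha.mul_mem_plusSpace hu hv⟩

theorem mul_mem_eig_one_sup_eig_zero (ha : D.IsAxis a) (hu : u ∈ D.eig a 1 ⊔ D.eig a 0)
    (hv : v ∈ D.eig a 1 ⊔ D.eig a 0) : D.mul u v ∈ D.eig a 1 ⊔ D.eig a 0 := by
  obtain ⟨σ, hσ⟩ := ha.exists_sigma_isSignGrading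
  exact hσ.mul_mem_left hu hv

theorem mul_mem_eig_quarter (ha : D.IsAxis a) (hu : u ∈ D.eig a 1 ⊔ D.eig a 0)
    (hv : v ∈ D.eig a (1/4)) : D.mul u v ∈ D.eig a (1/4) := by
  obtain ⟨σ, hσ⟩ := ha.exists_sigma_isSignGrading
  exact hσ.mul_mem_right hu hv

theorem mul_mem_eig_one_sup_eig_zero_of_mem_eig_quarter (ha : D.IsAxis a)
    (hu : u ∈ D.eig a (1/4)) (hv : v ∈ D.eig a (1/4)) : D.mul u v ∈ D.eig a 1 ⊔ D.eig a 0 := by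
  obtain ⟨σ, hσ⟩ := ha.exists_sigma_isSignGrading
  exact hσ.mul_mem_left_of_mem_right hu hv

end IsAxis

end MajoranaData

/-- The fusion rules for the eigenspaces of a Majorana axis. -/
theorem MajoranaData.fusion_rules {V : Type*} [AddCommGroup V] [Module ℝ V]
    (D : MajoranaData V) (a : V) (ha : D.IsAxis a) :
    (∀ u ∈ D.eig a 0, ∀ v ∈ D.eig a 0, D.mul u v ∈ D.eig a 0) ∧
    (∀ u ∈ D.eig a 0, ∀ v ∈ D.eig a (1/4), D.mul u v ∈ D.eig a (1/4)) ∧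
    (∀ u ∈ D.eig a 0, ∀ v ∈ D.eig a (1/32), D.mul u v ∈ D.eig a (1/32)) ∧
    (∀ u ∈ D.eig a (1/4), ∀ v ∈ D.eig a (1/4), D.mul u v ∈ D.eig a 1 ⊔ D.eig a 0) ∧
    (∀ u ∈ D.eig a (1/4), ∀ v ∈ D.eig a (1/32), D.mul u v ∈ D.eig a (1/32)) ∧
    (∀ u ∈ D.eig a (1/32), ∀ v ∈ D.eig a (1/32),
      D.mul u v ∈ D.eig a 1 ⊔ D.eig a 0 ⊔ D.eig a (1/4)) := by
  have sup_of_eig_zero {w : V} (hw : w ∈ D.eig a 0) : w ∈ D.eig a 1 ⊔ D.eig a 0 :=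
    Submodule.mem_sup_right hw
  have plus_of_eig_zero {w : V} (hw : w ∈ D.eig a 0) : w ∈ D.plusSpace a :=
    Submodule.mem_sup_left (sup_of_eig_zero hw)
  have plus_of_eig_quarter {w : V} (hw : w ∈ D.eig a (1/4)) : w ∈ D.plusSpace a :=
    Submodule.mem_sup_right hw
  refine ⟨fun u hu v hv => ?_, fun u hu v hv => ?_, fun u hu v hv => ?_,
    fun u hu v hv => ?_, fun u hu v hv => ?_, fun u hu v hv => ?_⟩
  · exact ha.mem_eig_zero_of_inn_eq_zero
      (ha.mul_mem_eig_one_sup_eig_zero (sup_of_eig_zero hu) (sup_of_eig_zero hv))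
      (inn_mul_eq_zero_of_mem_eig_zero hu)
  · exact ha.mul_mem_eig_quarter (sup_of_eig_zero hu) hv
  · exact ha.mul_mem_eig_thirtySecond (plus_of_eig_zero hu) hv
  · exact ha.mul_mem_eig_one_sup_eig_zero_of_mem_eig_quarter hu hv
  · exact ha.mul_mem_eig_thirtySecond (plus_of_eig_quarter hu) hv
  · exact ha.mul_mem_plusSpace_of_mem_eig_thirtySecond hu hv
end
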